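/- For all n ≥ 1 and k ≥ 1, the following identity holds in the polynomial ring ℤ[x_1, …, x_k]: Σ_{μ ∈ wcomp_{n−1}, supp(μ) ⊆ [k]} |Lyn_μ| x^μ = Σ_{Υ ∈ Nor_n} e_{λ^{Lyn}(Υ)}(x_1, …, x_k). -/

import Mathlib

/-! Colored labeled binary trees.  Leaf labels are positive integers; colors are
natural numbers (the paper's color set ℙ = {1,2,…} is identified with ℕ via j ↦ j-1,
i.e. color index `i : ℕ` represents the paper's color `i+1`). -/

inductive CTree : Type
  | leaf (label : ℕ) : CTree
  | node (color : ℕ) (l r : CTree) : CTree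
deriving DecidableEq

namespace CTree

/-- leaf labels from left to right -/
def leavesList : CTree → List ℕ
  | leaf m => [m]
  | node _ l r => leavesList l ++ leavesList r

/-- the valency `v(x)`: smallest leaf label of the subtree -/
def minLeaf : CTree → ℕ
  | leaf m => m
  | node _ l r => min (minLeaf l) (minLeaf r)

/-- a tree is normalized if in every subtree the leftmost leaf carries the
smallest leaf label of the subtree. -/
def Normalized : CTree → Prop
  | leaf _ => True
  | node _ l r => Normalized l ∧ Normalized r ∧ minLeaf l < minLeaf r

/-- number of internal nodes with color `j` -/
def colorCount : CTree → ℕ → ℕ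
  | leaf _, _ => 0
  | node c l r, j => (if c = j then 1 else 0) + colorCount l j + colorCount r j

def isLeafB : CTree → Bool
  | leaf _ => true
  | node _ _ _ => false

def left : CTree → CTree
  | leaf m => leaf m
  | node _ l _ => l

def right : CTree → CTree
  | leaf m => leaf m
  | node _ _ r => r

def rootColor : CTree → ℕ
  | leaf _ => 0
  | node c _ _ => c

/-- the root of `T` is a Lyndon node: either the left child is a leaf
or `v(R(L(x))) > v(R(x))`. (Leaves count as Lyndon.) -/
def RootLyndonB (T : CTree) : Bool :=
  isLeafB T || isLeafB (left T) || decide (minLeaf (right T) < minLeaf (right (left T)))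

/-- colored Lyndon condition: every internal node that is not a Lyndon node
satisfies `color(L(x)) > color(x)` -/
def LynColored : CTree → Prop
  | leaf _ => True
  | node c l r => LynColored l ∧ LynColored r ∧
      (RootLyndonB (node c l r) = true ∨ c < rootColor l)

/-- colored comb condition: every internal node whose right child is internal
satisfies `color(x) > color(R(x))` -/
def CombColored : CTree → Prop
  | leaf _ => True
  | node c l r => CombColored l ∧ CombColored r ∧ (isLeafB r = true ∨ rootColor r < c)

/-- all colors equal to `0`: an (essentially) uncolored tree. -/
def Mono : CTree → Prop
  | leaf _ => True
  | node c l r => c = 0 ∧ Mono l ∧ Mono r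

/-- the tree has leaf label set `[n] = {1,…,n}` (each label once) -/
def OnSet (n : ℕ) (T : CTree) : Prop := T.leavesList.Perm ((List.range n).map (· + 1))

/-- `lynAux T = (b, m)`: `b` is the size of the block of `π^{Lyn}` containing the
root (`0` for a leaf) and `m` is the multiset of sizes of the other blocks. -/
def lynAux : CTree → ℕ × Multiset ℕ
  | leaf _ => (0, 0)
  | node c l r =>
    let bl := (lynAux l).1
    let ml := (lynAux l).2
    let br := (lynAux r).1
    let mr := (lynAux r).2
    let closedR := mr + (if br = 0 then 0 else {br})
    if RootLyndonB (node c l r) then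
      (1, ml + (if bl = 0 then 0 else {bl}) + closedR)
    else (1 + bl, ml + closedR)

/-- the Lyndon type `λ^{Lyn}`: multiset of block sizes of `π^{Lyn}` -/
def lynType (T : CTree) : Multiset ℕ :=
  (if (lynAux T).1 = 0 then (0 : Multiset ℕ) else {(lynAux T).1}) + (lynAux T).2

def combAux : CTree → ℕ × Multiset ℕ
  | leaf _ => (0, 0)
  | node _ l r =>
    let bl := (combAux l).1
    let ml := (combAux l).2
    let br := (combAux r).1
    let mr := (combAux r).2
    (1 + br, ml + mr + (if bl = 0 then 0 else {bl}))

/-- the comb type `λ^{Comb}`: multiset of block sizes of `π^{Comb}` -/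
def combType (T : CTree) : Multiset ℕ :=
  (if (combAux T).1 = 0 then (0 : Multiset ℕ) else {(combAux T).1}) + (combAux T).2

/-- subtrees (= nodes) of a tree -/
def subtreesC : CTree → List CTree
  | leaf m => [leaf m]
  | node c l r => node c l r :: (subtreesC l ++ subtreesC r)

end CTree

/-- normalized uncolored labeled binary trees on `[n]`: the set `Nor_n`. -/
def NorSet (n : ℕ) : Set CTree :=
  {T | T.OnSet n ∧ T.Normalized ∧ T.Mono}

/-- `Lyn_μ` for a weak composition `μ` (indexed by ℕ; `μ i` is the number of
internal nodes of color `i`). -/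
def LynSet (n : ℕ) (μ : ℕ →₀ ℕ) : Set CTree :=
  {T | T.OnSet n ∧ T.Normalized ∧ T.LynColored ∧ ∀ j, T.colorCount j = μ j}

/-- `Comb_μ` -/
def CombSet (n : ℕ) (μ : ℕ →₀ ℕ) : Set CTree :=
  {T | T.OnSet n ∧ T.Normalized ∧ T.CombColored ∧ ∀ j, T.colorCount j = μ j}

/-- `Lyn_μ` for `μ ∈ wcomp` with support in `[k]`, given as `f : Fin k → ℕ`. -/
def LynSetF (n k : ℕ) (f : Fin k → ℕ) : Set CTree :=
  {T | T.OnSet n ∧ T.Normalized ∧ T.LynColored ∧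
    ∀ j : ℕ, T.colorCount j = if h : j < k then f ⟨j, h⟩ else 0}

def CombSetF (n k : ℕ) (f : Fin k → ℕ) : Set CTree :=
  {T | T.OnSet n ∧ T.Normalized ∧ T.CombColored ∧
    ∀ j : ℕ, T.colorCount j = if h : j < k then f ⟨j, h⟩ else 0}

open MvPolynomial

/-- the elementary symmetric polynomial `e_m(x_1,…,x_k)` over ℤ -/
noncomputable def epoly (k m : ℕ) : MvPolynomial (Fin k) ℤ :=
  ∑ S ∈ Finset.powersetCard m (Finset.univ : Finset (Fin k)), ∏ i ∈ S, X i

/-- `e_λ = e_{λ₁} ⋯ e_{λ_r}` for an integer partition `λ` given as a multiset -/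
noncomputable def eprod (k : ℕ) (lam : Multiset ℕ) : MvPolynomial (Fin k) ℤ :=
  (lam.map (epoly k)).prod


/-! Fix a shape `Υ ∈ Nor_n`. A coloring of `Υ` is Lyndon exactly when the colors strictly
increase down every block of `π^{Lyn}(Υ)` (a chain `x, L(x), L(L(x)), …` of left children that
ends at a Lyndon node), and the blocks are constrained independently. The colorings of a block
of size `b` by `[k]` are therefore the `b`-subsets of `[k]`, so the Lyndon colorings of `Υ` have
generating function `e_{λ^{Lyn}(Υ)}`; summing over shapes gives the identity.

The recursion tracks the block of the root: the Lyndon colorings with root color `c` have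
generating function `x_c e_{b-1}(x_{c+1}, …, x_k) e_m`, where `(b, m) = lynAux Υ`, and it closes
because a `(b+1)`-subset splits into its minimum and a `b`-subset of the larger colors. -/

open Finset

theorem Multiset.esymm_cons_succ {R : Type*} [CommSemiring R] (a : R) (s : Multiset R) (b : ℕ) :
    (a ::ₘ s).esymm (b + 1) = s.esymm (b + 1) + a * s.esymm b := by
  simp [Multiset.esymm, Multiset.sum_map_mul_left]

theorem Finset.esymm_map_val_succ {α R : Type*} [LinearOrder α] [CommSemiring R] (x : α → R)
    (s : Finset α) (b : ℕ) :
    (s.val.map x).esymm (b + 1) = ∑ a ∈ s, x a * ((s.filter (a < ·)).val.map x).esymm b := by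
  induction s using Finset.induction_on_min with
  | empty => simp [Multiset.esymm, Multiset.powersetCard_zero_right]
  | insert a s ha ih =>
    have ha' : a ∉ s := fun h => lt_irrefl a (ha a h)
    have h_filter_a : (insert a s).filter (a < ·) = s := by
      rw [filter_insert, if_neg (lt_irrefl a), filter_true_of_mem ha]
    have h_filter (c) (hc : c ∈ s) : (insert a s).filter (c < ·) = s.filter (c < ·) := by
      rw [filter_insert, if_neg (not_lt.2 (ha c hc).le)]
    rw [insert_val_of_notMem ha', Multiset.map_cons, Multiset.esymm_cons_succ, ih,
      sum_insert ha', add_comm, h_filter_a]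
    exact congrArg _ (sum_congr rfl fun c hc => by rw [h_filter c hc])

theorem Finset.range_filter_lt (c k : ℕ) : (range k).filter (c < ·) = Ioo c k := by
  ext; simp only [mem_filter, mem_range, mem_Ioo]; omega

noncomputable def colorVar (k c : ℕ) : MvPolynomial (Fin k) ℤ :=
  if h : c < k then X ⟨c, h⟩ else 0

noncomputable def colorEsymm (k : ℕ) (s : Finset ℕ) (b : ℕ) : MvPolynomial (Fin k) ℤ :=
  (s.val.map (colorVar k)).esymm b

theorem colorEsymm_zero (k : ℕ) (s : Finset ℕ) : colorEsymm k s 0 = 1 := by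
  simp [colorEsymm, Multiset.esymm, Multiset.powersetCard_zero_left]

theorem colorEsymm_succ (k : ℕ) (s : Finset ℕ) (b : ℕ) :
    colorEsymm k s (b + 1) = ∑ c ∈ s, colorVar k c * colorEsymm k (s.filter (c < ·)) b :=
  esymm_map_val_succ _ _ _

theorem colorEsymm_Ioo_succ (k c b : ℕ) :
    colorEsymm k (Ioo c k) (b + 1) =
      ∑ c' ∈ Ioo c k, colorVar k c' * colorEsymm k (Ioo c' k) b := by
  rw [colorEsymm_succ]
  refine sum_congr rfl fun c' hc' => ?_
  have := mem_Ioo.1 hc'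
  rw [show (Ioo c k).filter (c' < ·) = Ioo c' k by ext; simp only [mem_filter, mem_Ioo]; omega]

theorem colorEsymm_range_succ (k b : ℕ) :
    colorEsymm k (range k) (b + 1) = ∑ c ∈ range k, colorVar k c * colorEsymm k (Ioo c k) b := by
  simp only [colorEsymm_succ, range_filter_lt]

theorem colorEsymm_range (k b : ℕ) : colorEsymm k (range k) b = epoly k b := by
  rw [colorEsymm, epoly, ← Finset.esymm_map_val, ← Nat.Iio_eq_range, ← Fin.map_valEmbedding_univ,
    Finset.map_val, Multiset.map_map]
  congr 2
  funext i
  simp [colorVar]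

theorem eprod_add (k : ℕ) (a b : Multiset ℕ) : eprod k (a + b) = eprod k a * eprod k b := by
  simp [eprod]

theorem eprod_cons (k b : ℕ) (m : Multiset ℕ) : eprod k (b ::ₘ m) = epoly k b * eprod k m := by
  simp [eprod]

namespace CTree

def shape : CTree → CTree
  | leaf m => leaf m
  | node _ l r => node 0 (shape l) (shape r)

def ColorsLT (k : ℕ) : CTree → Prop
  | leaf _ => True
  | node c l r => c < k ∧ ColorsLT k l ∧ ColorsLT k r

def recolorings (k : ℕ) : CTree → Finset CTree
  | leaf m => {leaf m}
  | node _ l r => (range k ×ˢ recolorings k l ×ˢ recolorings k r).image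
      fun p => node p.1 p.2.1 p.2.2

instance decidableLynColored : DecidablePred LynColored
  | leaf _ => isTrue trivial
  | node c l r =>
    haveI := decidableLynColored l
    haveI := decidableLynColored r
    decidable_of_iff (l.LynColored ∧ r.LynColored ∧
      (RootLyndonB (node c l r) = true ∨ c < l.rootColor)) Iff.rfl

@[simp] theorem leavesList_shape (T : CTree) : T.shape.leavesList = T.leavesList := by
  induction T <;> simp [shape, leavesList, *]

@[simp] theorem minLeaf_shape (T : CTree) : T.shape.minLeaf = T.minLeaf := by
  induction T <;> simp [shape, minLeaf, *]

@[simp] theorem normalized_shape (T : CTree) : T.shape.Normalized ↔ T.Normalized := by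
  induction T <;> simp [shape, Normalized, *]

theorem mono_shape (T : CTree) : T.shape.Mono := by
  induction T <;> simp [shape, Mono, *]

@[simp] theorem shape_shape (T : CTree) : T.shape.shape = T.shape := by
  induction T <;> simp [shape, *]

theorem shape_eq_self_of_mono {T : CTree} (h : T.Mono) : T.shape = T := by
  induction T with
  | leaf m => rfl
  | node c l r ihl ihr => obtain ⟨rfl, hl, hr⟩ := h; simp [shape, ihl hl, ihr hr]

@[simp] theorem rootLyndonB_shape (T : CTree) : T.shape.RootLyndonB = T.RootLyndonB := by
  rcases T with _ | ⟨c, _ | ⟨c', ll, lr⟩, r⟩ <;>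
    simp only [shape, RootLyndonB, isLeafB, left, right, minLeaf_shape] <;> rfl

theorem rootLyndonB_eq_of_shape_eq {U T : CTree} (h : U.shape = T.shape) :
    U.RootLyndonB = T.RootLyndonB := by
  rw [← rootLyndonB_shape U, h, rootLyndonB_shape]

theorem mem_recolorings {k : ℕ} {T U : CTree} :
    U ∈ T.recolorings k ↔ U.shape = T.shape ∧ U.ColorsLT k := by
  induction T generalizing U with
  | leaf m => cases U <;> simp [recolorings, shape, ColorsLT, eq_comm]
  | node c l r ihl ihr =>
    cases U <;> simp [recolorings, shape, ColorsLT, ihl, ihr]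
    tauto

theorem rootColor_lt_of_mem_recolorings {k c : ℕ} {l r U : CTree}
    (hU : U ∈ (node c l r).recolorings k) : U.rootColor < k := by
  simp only [recolorings, mem_image, mem_product, mem_range] at hU
  obtain ⟨⟨c', Ul, Ur⟩, ⟨hc', -, -⟩, rfl⟩ := hU
  exact hc'

theorem sum_recolorings_node {M : Type*} [AddCommMonoid M] (k c : ℕ) (l r : CTree)
    (F : CTree → M) :
    ∑ U ∈ (node c l r).recolorings k, F U =
      ∑ c' ∈ range k, ∑ Ul ∈ l.recolorings k, ∑ Ur ∈ r.recolorings k, F (node c' Ul Ur) := by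
  rw [recolorings, sum_image fun p _ q _ h => by simpa [Prod.ext_iff] using h]
  simp only [sum_product]

def colorContent (k : ℕ) (U : CTree) : Fin k → ℕ := fun i => U.colorCount i

noncomputable def colorMonomial (k : ℕ) (U : CTree) : MvPolynomial (Fin k) ℤ :=
  ∏ i : Fin k, X i ^ U.colorContent k i

noncomputable def lyndonGF (k : ℕ) (T : CTree) : MvPolynomial (Fin k) ℤ :=
  ∑ U ∈ T.recolorings k with U.LynColored, U.colorMonomial k

noncomputable def lyndonRootGF (k : ℕ) (T : CTree) (c : ℕ) : MvPolynomial (Fin k) ℤ :=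
  ∑ U ∈ T.recolorings k with U.LynColored ∧ U.rootColor = c, U.colorMonomial k

@[simp] theorem rootColor_node (c : ℕ) (l r : CTree) : (node c l r).rootColor = c := rfl

theorem colorMonomial_node {k c : ℕ} (hc : c < k) (l r : CTree) :
    (node c l r).colorMonomial k = colorVar k c * l.colorMonomial k * r.colorMonomial k := by
  have hvar : ∏ i : Fin k, (X i : MvPolynomial (Fin k) ℤ) ^ (if c = i then 1 else 0) =
      colorVar k c := by
    rw [colorVar, dif_pos hc, Fintype.prod_eq_single ⟨c, hc⟩ fun i hi => by
      rw [if_neg fun h => hi (Fin.ext h.symm), pow_zero]]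
    simp
  simp only [colorMonomial, colorContent, colorCount, pow_add, prod_mul_distrib, hvar]

theorem lyndonGF_leaf (k m : ℕ) : (leaf m).lyndonGF k = 1 := by
  rw [lyndonGF, recolorings, filter_singleton, if_pos (show (leaf m).LynColored from trivial),
    sum_singleton]
  simp [colorMonomial, colorContent, colorCount]

theorem sum_recolorings_filter_rootColor (k c₀ : ℕ) (l r : CTree) (q : ℕ → Prop) [DecidablePred q] :
    ∑ U ∈ (node c₀ l r).recolorings k with U.LynColored ∧ q U.rootColor, U.colorMonomial k =
      ∑ c ∈ range k with q c, (node c₀ l r).lyndonRootGF k c := by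
  rw [← sum_fiberwise_of_maps_to (g := rootColor) (t := (range k).filter q) fun U hU => by
    obtain ⟨hU, -, hq⟩ := mem_filter.1 hU
    exact mem_filter.2 ⟨mem_range.2 (rootColor_lt_of_mem_recolorings hU), hq⟩]
  refine sum_congr rfl fun c hc => ?_
  rw [lyndonRootGF, filter_filter]
  refine sum_congr (filter_congr fun U _ => ?_) fun _ _ => rfl
  have := (mem_filter.1 hc).2
  constructor
  · rintro ⟨⟨h, -⟩, rfl⟩; exact ⟨h, rfl⟩
  · rintro ⟨h, rfl⟩; exact ⟨⟨h, this⟩, rfl⟩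

theorem lyndonGF_node (k c₀ : ℕ) (l r : CTree) :
    (node c₀ l r).lyndonGF k = ∑ c ∈ range k, (node c₀ l r).lyndonRootGF k c := by
  simpa [lyndonGF] using sum_recolorings_filter_rootColor k c₀ l r fun _ => True

theorem lyndonRootGF_node {k c : ℕ} (hc : c < k) (c₀ : ℕ) (l r : CTree) :
    (node c₀ l r).lyndonRootGF k c = colorVar k c *
      (∑ U ∈ l.recolorings k with
        U.LynColored ∧ ((node c₀ l r).RootLyndonB = true ∨ c < U.rootColor), U.colorMonomial k) *
      r.lyndonGF k := by
  have hterm (Ul) (hUl : Ul ∈ l.recolorings k) (Ur) (hUr : Ur ∈ r.recolorings k) :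
      (if (node c Ul Ur).LynColored ∧ (node c Ul Ur).rootColor = c then
        (node c Ul Ur).colorMonomial k else 0) =
      colorVar k c * (if Ul.LynColored ∧ ((node c₀ l r).RootLyndonB = true ∨ c < Ul.rootColor)
        then Ul.colorMonomial k else 0) * (if Ur.LynColored then Ur.colorMonomial k else 0) := by
    have hroot : (node c Ul Ur).RootLyndonB = (node c₀ l r).RootLyndonB :=
      rootLyndonB_eq_of_shape_eq (by
        simp [shape, (mem_recolorings.1 hUl).1, (mem_recolorings.1 hUr).1])
    simp only [LynColored, rootColor_node, hroot, and_true, colorMonomial_node hc]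
    split_ifs <;> first | ring1 | (exfalso; tauto)
  rw [lyndonRootGF, lyndonGF, sum_filter, sum_filter, sum_filter, sum_recolorings_node,
    sum_eq_single c, mul_sum (l.recolorings k), sum_mul_sum]
  · exact sum_congr rfl fun Ul hUl => sum_congr rfl fun Ur hUr => hterm Ul hUl Ur hUr
  · intro c' _ hc'
    exact sum_eq_zero fun Ul _ => sum_eq_zero fun Ur _ => if_neg fun h => hc' h.2
  · exact fun h => absurd (mem_range.2 hc) h

theorem lynAux_node_of_rootLyndonB {c : ℕ} {l r : CTree} (h : (node c l r).RootLyndonB = true) :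
    (node c l r).lynAux = (1, l.lynType + r.lynType) := by
  simp only [lynAux, h, if_true, lynType, Prod.mk.injEq, true_and]
  abel

theorem lynAux_node_of_not_rootLyndonB {c : ℕ} {l r : CTree}
    (h : (node c l r).RootLyndonB = false) :
    (node c l r).lynAux = (1 + l.lynAux.1, l.lynAux.2 + r.lynType) := by
  simp only [lynAux, h, lynType, Bool.false_eq_true, if_false, Prod.mk.injEq, true_and]
  abel

theorem lynAux_fst_node_ne_zero (c : ℕ) (l r : CTree) : (node c l r).lynAux.1 ≠ 0 := by
  cases h : (node c l r).RootLyndonB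
  · simp [lynAux_node_of_not_rootLyndonB h]
  · simp [lynAux_node_of_rootLyndonB h]

theorem lynType_of_lynAux_fst_eq_succ {T : CTree} {b : ℕ} (h : T.lynAux.1 = b + 1) :
    T.lynType = (b + 1) ::ₘ T.lynAux.2 := by
  simp [lynType, h]

theorem lyndonGF_eq_eprod_of_lyndonRootGF {k : ℕ} {T : CTree}
    (h : ∀ b, T.lynAux.1 = b + 1 → ∀ c < k,
      T.lyndonRootGF k c = colorVar k c * colorEsymm k (Ioo c k) b * eprod k T.lynAux.2) :
    T.lyndonGF k = eprod k T.lynType := by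
  cases T with
  | leaf m => simp [lyndonGF_leaf, lynType, lynAux, eprod]
  | node c₀ l r =>
    obtain ⟨b, hb⟩ := Nat.exists_eq_succ_of_ne_zero (lynAux_fst_node_ne_zero c₀ l r)
    rw [lyndonGF_node, sum_congr rfl fun c hc => h b hb c (mem_range.1 hc), ← sum_mul,
      ← colorEsymm_range_succ, colorEsymm_range, lynType_of_lynAux_fst_eq_succ hb, eprod_cons]

theorem lyndonRootGF_eq (k : ℕ) (T : CTree) :
    ∀ b, T.lynAux.1 = b + 1 → ∀ c < k,
      T.lyndonRootGF k c = colorVar k c * colorEsymm k (Ioo c k) b * eprod k T.lynAux.2 := by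
  induction T with
  | leaf m => simp [lynAux]
  | node c₀ l r ihl ihr =>
    intro b hb c hc
    rw [lyndonRootGF_node hc, lyndonGF_eq_eprod_of_lyndonRootGF ihr]
    cases hRL : (node c₀ l r).RootLyndonB with
    | true =>
      rw [lynAux_node_of_rootLyndonB hRL] at hb ⊢
      obtain rfl : b = 0 := by omega
      simp only [true_or, and_true, colorEsymm_zero, mul_one, eprod_add]
      rw [← lyndonGF, lyndonGF_eq_eprod_of_lyndonRootGF ihl]
      ring
    | false =>
      rw [lynAux_node_of_not_rootLyndonB hRL] at hb ⊢
      obtain ⟨cl, ll, lr, rfl⟩ : ∃ cl ll lr, l = node cl ll lr := by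
        cases l with
        | leaf m => simp [RootLyndonB, isLeafB, left] at hRL
        | node cl ll lr => exact ⟨cl, ll, lr, rfl⟩
      obtain ⟨b', hb'⟩ := Nat.exists_eq_succ_of_ne_zero (lynAux_fst_node_ne_zero cl ll lr)
      obtain rfl : b = b' + 1 := by omega
      simp only [Bool.false_eq_true, false_or]
      rw [sum_recolorings_filter_rootColor, range_filter_lt,
        sum_congr rfl fun c' hc' => ihl b' hb' c' (mem_Ioo.1 hc').2, ← sum_mul,
        ← colorEsymm_Ioo_succ, eprod_add]
      ring

theorem lyndonGF_eq_eprod_lynType (k : ℕ) (T : CTree) : T.lyndonGF k = eprod k T.lynType :=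
  lyndonGF_eq_eprod_of_lyndonRootGF (lyndonRootGF_eq k T)

theorem length_leavesList_pos (T : CTree) : 0 < T.leavesList.length := by
  induction T <;> simp [leavesList, *]

theorem finite_setOf_mono (n m : ℕ) :
    {T : CTree | T.Mono ∧ (∀ x ∈ T.leavesList, x ≤ n) ∧ T.leavesList.length ≤ m}.Finite := by
  induction m with
  | zero =>
    refine Set.finite_empty.subset fun T ⟨_, _, hT⟩ => ?_
    have := T.length_leavesList_pos
    omega
  | succ m ih =>
    refine (((Set.finite_Iic n).image leaf).union (ih.image2 (node 0) ih)).subset ?_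
    rintro (x | ⟨c, l, r⟩) ⟨hmono, hle, hlen⟩
    · exact Or.inl ⟨x, hle x (by simp [leavesList]), rfl⟩
    · obtain ⟨rfl, hl, hr⟩ := hmono
      simp only [leavesList, List.mem_append, List.length_append] at hle hlen
      have := l.length_leavesList_pos
      have := r.length_leavesList_pos
      exact Or.inr ⟨l, ⟨hl, fun x hx => hle x (Or.inl hx), by omega⟩,
        r, ⟨hr, fun x hx => hle x (Or.inr hx), by omega⟩, rfl⟩

theorem length_leavesList_of_onSet {n : ℕ} {T : CTree} (h : T.OnSet n) :
    T.leavesList.length = n := by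
  simp [h.length_eq]

theorem le_of_mem_leavesList_of_onSet {n x : ℕ} {T : CTree} (h : T.OnSet n)
    (hx : x ∈ T.leavesList) : x ≤ n := by
  obtain ⟨i, hi, rfl⟩ := List.mem_map.1 (h.mem_iff.1 hx)
  exact List.mem_range.1 hi

theorem colorsLT_iff {k : ℕ} {U : CTree} :
    U.ColorsLT k ↔ ∀ j, k ≤ j → U.colorCount j = 0 := by
  induction U with
  | leaf m => simp [ColorsLT, colorCount]
  | node c l r ihl ihr =>
    simp only [ColorsLT, colorCount, ihl, ihr, Nat.add_eq_zero_iff, ite_eq_right_iff,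
      one_ne_zero, imp_false, forall_and]
    refine ⟨fun ⟨hc, hl, hr⟩ => ⟨⟨fun j hj hcj => by omega, hl⟩, hr⟩,
      fun ⟨⟨hc, hl⟩, hr⟩ => ⟨?_, hl, hr⟩⟩
    by_contra h
    exact hc c (by omega) rfl

theorem colorCount_eq_dite_iff {k : ℕ} {f : Fin k → ℕ} {U : CTree} :
    (∀ j : ℕ, U.colorCount j = if h : j < k then f ⟨j, h⟩ else 0) ↔
      U.ColorsLT k ∧ U.colorContent k = f := by
  rw [colorsLT_iff, funext_iff]
  constructor
  · intro h
    exact ⟨fun j hj => by rw [h, dif_neg (by omega)], fun i => by rw [colorContent, h, dif_pos i.2]⟩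
  · rintro ⟨h0, hf⟩ j
    split_ifs with hj
    · exact hf ⟨j, hj⟩
    · exact h0 j (by omega)

theorem sum_colorCount_add_one {k : ℕ} {U : CTree} (h : U.ColorsLT k) :
    ∑ j ∈ range k, U.colorCount j + 1 = U.leavesList.length := by
  induction U with
  | leaf m => simp [colorCount, leavesList]
  | node c l r ihl ihr =>
    obtain ⟨hc, hl, hr⟩ := h
    simp only [colorCount, sum_add_distrib, sum_ite_eq, mem_range, if_pos hc, leavesList,
      List.length_append, ← ihl hl, ← ihr hr]
    omega

end CTree

open CTree

theorem finite_norSet (n : ℕ) : (NorSet n).Finite :=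
  (finite_setOf_mono n n).subset fun _ ⟨hOn, _, hmono⟩ =>
    ⟨hmono, fun _ => le_of_mem_leavesList_of_onSet hOn, (length_leavesList_of_onSet hOn).le⟩

noncomputable def lyndonTrees (n k : ℕ) : Finset CTree :=
  ((finite_norSet n).toFinset.biUnion (recolorings k)).filter LynColored

theorem shape_mem_norSet_iff {n : ℕ} {U : CTree} :
    U.shape ∈ NorSet n ↔ U.OnSet n ∧ U.Normalized := by
  simp [NorSet, OnSet, mono_shape]

theorem mem_lyndonTrees {n k : ℕ} {U : CTree} :
    U ∈ lyndonTrees n k ↔ U.OnSet n ∧ U.Normalized ∧ U.LynColored ∧ U.ColorsLT k := by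
  simp only [lyndonTrees, mem_filter, mem_biUnion, Set.Finite.mem_toFinset, mem_recolorings]
  constructor
  · rintro ⟨⟨T, hT, hsh, hcol⟩, hL⟩
    rw [shape_eq_self_of_mono hT.2.2] at hsh
    obtain ⟨hOn, hN⟩ := shape_mem_norSet_iff.1 (hsh ▸ hT)
    exact ⟨hOn, hN, hL, hcol⟩
  · rintro ⟨hOn, hN, hL, hcol⟩
    exact ⟨⟨U.shape, shape_mem_norSet_iff.2 ⟨hOn, hN⟩, (shape_shape U).symm, hcol⟩, hL⟩

theorem lynSetF_eq_filter_lyndonTrees (n k : ℕ) (f : Fin k → ℕ) :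
    LynSetF n k f = ↑((lyndonTrees n k).filter (·.colorContent k = f)) := by
  ext U
  simp only [LynSetF, Set.mem_ofPred_eq, coe_filter, mem_lyndonTrees, colorCount_eq_dite_iff]
  tauto

theorem colorContent_mem_antidiagonalTuple {n k : ℕ} {U : CTree} (hU : U ∈ lyndonTrees n k) :
    U.colorContent k ∈ Nat.antidiagonalTuple k (n - 1) := by
  obtain ⟨hOn, -, -, hcol⟩ := mem_lyndonTrees.1 hU
  have := sum_colorCount_add_one hcol
  rw [length_leavesList_of_onSet hOn, ← Fin.sum_univ_eq_sum_range] at this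
  rw [Nat.mem_antidiagonalTuple]
  exact Nat.eq_sub_of_add_eq this

theorem shape_mem_toFinset_norSet {n k : ℕ} {U : CTree} (hU : U ∈ lyndonTrees n k) :
    U.shape ∈ (finite_norSet n).toFinset := by
  obtain ⟨hOn, hN, -, -⟩ := mem_lyndonTrees.1 hU
  rw [Set.Finite.mem_toFinset, shape_mem_norSet_iff]
  exact ⟨hOn, hN⟩

theorem filter_shape_lyndonTrees {n k : ℕ} {T : CTree} (hT : T ∈ NorSet n) :
    (lyndonTrees n k).filter (·.shape = T) = (T.recolorings k).filter LynColored := by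
  ext U
  simp only [mem_filter, mem_lyndonTrees, mem_recolorings, shape_eq_self_of_mono hT.2.2]
  constructor
  · rintro ⟨⟨-, -, hL, hcol⟩, hsh⟩
    exact ⟨⟨hsh, hcol⟩, hL⟩
  · rintro ⟨⟨hsh, hcol⟩, hL⟩
    obtain ⟨hOn, hN⟩ := shape_mem_norSet_iff.1 (hsh ▸ hT)
    exact ⟨⟨hOn, hN, hL, hcol⟩, hsh⟩

theorem lyndon_generating_function_eq_lynType_sum_general (n k : ℕ) :
    (∑ f ∈ Finset.Nat.antidiagonalTuple k (n - 1),
        (Nat.card (LynSetF n k f) : MvPolynomial (Fin k) ℤ) * ∏ i, X i ^ f i) =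
      ∑ᶠ T ∈ NorSet n, eprod k (CTree.lynType T) := by
  rw [← (finite_norSet n).coe_toFinset, finsum_mem_coe_finset]
  calc _ = ∑ f ∈ Nat.antidiagonalTuple k (n - 1),
        ∑ U ∈ lyndonTrees n k with U.colorContent k = f, U.colorMonomial k := by
        refine sum_congr rfl fun f _ => ?_
        rw [lynSetF_eq_filter_lyndonTrees, Nat.card_coe_set_eq, Set.ncard_coe_finset,
          ← nsmul_eq_mul, ← sum_const]
        exact sum_congr rfl fun U hU => by rw [colorMonomial, (mem_filter.1 hU).2]
    _ = ∑ U ∈ lyndonTrees n k, U.colorMonomial k :=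
        sum_fiberwise_of_maps_to (fun _ => colorContent_mem_antidiagonalTuple) _
    _ = ∑ T ∈ (finite_norSet n).toFinset,
        ∑ U ∈ lyndonTrees n k with U.shape = T, U.colorMonomial k :=
        (sum_fiberwise_of_maps_to (fun _ => shape_mem_toFinset_norSet) _).symm
    _ = _ := sum_congr rfl fun T hT => by
        rw [filter_shape_lyndonTrees ((finite_norSet n).mem_toFinset.1 hT), ← lyndonGF,
          lyndonGF_eq_eprod_lynType]

/-- `Σ_{μ ∈ wcomp_{n-1}, supp(μ) ⊆ [k]} |Lyn_μ| x^μ = Σ_{Υ ∈ Nor_n} e_{λ^{Lyn}(Υ)}`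
in `ℤ[x_1,…,x_k]`.  Here a weak composition `μ` with `supp(μ) ⊆ [k]` is
represented by `f : Fin k → ℕ`, and `x^μ = Π xᵢ^{f i}`. -/
theorem lyndon_generating_function_eq_lynType_sum (n k : ℕ) (hn : 1 ≤ n) (hk : 1 ≤ k) :
    (∑ f ∈ Finset.Nat.antidiagonalTuple k (n - 1),
        (Nat.card (LynSetF n k f) : MvPolynomial (Fin k) ℤ) * ∏ i, X i ^ f i) =
      ∑ᶠ T ∈ NorSet n, eprod k (CTree.lynType T) :=
  lyndon_generating_function_eq_lynType_sum_general n k
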